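/- The matrix inversion relation: if two sequences (a_n) and (b_n) in a commutative ring satisfy a_n = Σ_{k=0}^n (-1)^{n-k} C(n+k, n-k) b_k for all n ≥ 0, then b_n = Σ_{k=0}^n (C(2n, n-k) − C(2n, n-k-1)) a_k for all n ≥ 0. -/

import Mathlib

/-!
With `A n k = (-1)^(n-k) C(n+k, n-k)` and `B n k = C(2n, n-k) - C(2n, n-k-1)`, both lower
triangular, the claim follows from `B * A = 1`. Writing `n = j + d` and `k = j + i`, the entry
`(B * A) n j` is `1` for `d = 0`; for `d > 0` it splits into two alternating sums
`∑ᵢ (-1)^i C(2n, s-i) C(2j+i, i)` with `s = d` and `s = d - 1`, which Chu–Vandermonde evaluates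
to `C(2d-1, d)` and `C(2d-1, d-1)`, and these cancel.
-/

/-- Binomial coefficient with integer arguments: `0` outside `0 ≤ b ≤ a`. -/
def intChoose (a b : ℤ) : ℤ :=
  if 0 ≤ b ∧ b ≤ a then (a.toNat.choose b.toNat : ℤ) else 0

open Finset

theorem lowerTriangular_inversion {R : Type*} [Semiring R] {A B : ℕ → ℕ → R} {a b : ℕ → R}
    (hBA : ∀ n j, j ≤ n → ∑ k ∈ Ico j (n + 1), B n k * A k j = if j = n then 1 else 0)
    (h : ∀ n, a n = ∑ k ∈ range (n + 1), A n k * b k) (n : ℕ) :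
    b n = ∑ k ∈ range (n + 1), B n k * a k := by
  symm
  calc ∑ k ∈ range (n + 1), B n k * a k
      = ∑ k ∈ Ico 0 (n + 1), ∑ j ∈ Ico 0 (k + 1), B n k * (A k j * b j) := by
        simp only [h, mul_sum, range_eq_Ico]
    _ = ∑ j ∈ range (n + 1), (∑ k ∈ Ico j (n + 1), B n k * A k j) * b j := by
        rw [← sum_Ico_Ico_comm, range_eq_Ico]
        simp only [sum_mul, mul_assoc]
    _ = b n := by
        rw [sum_congr rfl fun j hj => by rw [hBA n j (mem_range_succ_iff.mp hj)]]
        simp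

theorem sum_neg_one_pow_mul_choose_mul_choose {K M : ℕ} (hKM : K < M) (s : ℕ) :
    ∑ i ∈ range (s + 1), (-1 : ℤ) ^ i * M.choose (s - i) * (K + i).choose i
      = (M - K - 1).choose s := by
  -- `(-1)^i * C(K+i, i)` is the generalized binomial coefficient `C(-(K+1), i)`, so this is
  -- Chu–Vandermonde for `(1 + x)^M * (1 + x)^(-(K+1)) = (1 + x)^(M-K-1)`.
  have hchoose_neg (i : ℕ) :
      Ring.choose (-((K + 1 : ℕ) : ℤ)) i = (-1) ^ i * (K + i).choose i := by
    rw [Ring.choose_neg, Units.smul_def, Int.coe_negOnePow_natCast, smul_eq_mul,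
      ← Ring.choose_natCast]
    push_cast
    ring_nf
  have hsum : ((M - K - 1 : ℕ) : ℤ) = M + -((K + 1 : ℕ) : ℤ) := by push_cast; omega
  rw [← Ring.choose_natCast, hsum, Ring.add_choose_eq _ (Commute.all _ _),
    ← Nat.sum_antidiagonal_swap, Nat.sum_antidiagonal_eq_sum_range_succ_mk]
  refine sum_congr rfl fun i _ => ?_
  simp only [Prod.swap_prod_mk, hchoose_neg, Ring.choose_natCast]
  ring

theorem intChoose_natCast (a b : ℕ) : intChoose a b = a.choose b := by
  by_cases hba : b ≤ a
  · simp [intChoose, hba]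
  · simp [intChoose, Nat.choose_eq_zero_of_lt (not_le.mp hba), hba]

theorem intChoose_of_neg (a : ℤ) {b : ℤ} (hb : b < 0) : intChoose a b = 0 := by
  simp [intChoose, not_le.mpr hb]

theorem sum_neg_one_pow_mul_intChoose_mul_choose {K M : ℕ} (hKM : K < M) {s L : ℕ}
    (hsL : s ≤ L) :
    ∑ i ∈ range (L + 1), (-1 : ℤ) ^ i * intChoose M ((s : ℤ) - i) * (K + i).choose i
      = (M - K - 1).choose s := by
  have hsub : range (s + 1) ⊆ range (L + 1) := range_subset_range.mpr (by omega)
  rw [← sum_neg_one_pow_mul_choose_mul_choose hKM s, ← sum_subset hsub fun i _ hi => ?_]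
  · refine sum_congr rfl fun i hi => ?_
    rw [← Nat.cast_sub (mem_range_succ_iff.mp hi), intChoose_natCast]
  · rw [intChoose_of_neg _ (by rw [mem_range_succ_iff] at hi; omega)]
    ring

def ballotCoeff (n k : ℕ) : ℤ :=
  intChoose (2 * n) ((n : ℤ) - k) - intChoose (2 * n) ((n : ℤ) - k - 1)

def signedChoose (n k : ℕ) : ℤ :=
  (-1) ^ (n - k) * intChoose ((n : ℤ) + k) ((n : ℤ) - k)

theorem signedChoose_add_self (j i : ℕ) :
    signedChoose (j + i) j = (-1) ^ i * (2 * j + i).choose i := by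
  rw [signedChoose, Nat.add_sub_cancel_left, ← intChoose_natCast]
  push_cast
  ring_nf

theorem ballotCoeff_add_add (j d i : ℕ) :
    ballotCoeff (j + d) (j + i) =
      intChoose (2 * (j + d) : ℕ) ((d : ℤ) - i) -
        intChoose (2 * (j + d) : ℕ) ((d : ℤ) - i - 1) := by
  rw [ballotCoeff]
  push_cast
  ring_nf

theorem sum_ballotCoeff_mul_signedChoose {j n : ℕ} (hjn : j ≤ n) :
    ∑ k ∈ Ico j (n + 1), ballotCoeff n k * signedChoose k j = if j = n then 1 else 0 := by
  obtain ⟨d, rfl⟩ := Nat.exists_eq_add_of_le hjn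
  rw [sum_Ico_eq_sum_range, show j + d + 1 - j = d + 1 by omega]
  simp only [ballotCoeff_add_add, signedChoose_add_self]
  rcases d with _ | t
  · simp [intChoose]
  · rw [if_neg (by omega)]
    set M := 2 * (j + (t + 1))
    have hterm (i : ℕ) :
        (intChoose M ((t + 1 : ℕ) - i) - intChoose M ((t + 1 : ℕ) - i - 1)) *
            ((-1) ^ i * (2 * j + i).choose i) =
          (-1) ^ i * intChoose M ((t + 1 : ℕ) - i) * (2 * j + i).choose i -
            (-1) ^ i * intChoose M ((t : ℕ) - i) * (2 * j + i).choose i := by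
      push_cast
      ring_nf
    have hM : M - 2 * j - 1 = 2 * t + 1 := by omega
    rw [sum_congr rfl fun i _ => hterm i, sum_sub_distrib,
      sum_neg_one_pow_mul_intChoose_mul_choose (by omega) le_rfl,
      sum_neg_one_pow_mul_intChoose_mul_choose (by omega) (Nat.le_succ t), hM,
      Nat.choose_symm_half, sub_self]

theorem stmt3 {R : Type*} [CommRing R] (a b : ℕ → R)
    (h : ∀ n : ℕ, a n = ∑ k ∈ Finset.range (n + 1),
        ((-1 : R) ^ (n - k)) * ((intChoose ((n : ℤ) + k) ((n : ℤ) - k) : ℤ) : R) * b k) :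
    ∀ n : ℕ, b n = ∑ k ∈ Finset.range (n + 1),
        ((intChoose (2 * n) ((n : ℤ) - k) - intChoose (2 * n) ((n : ℤ) - k - 1) : ℤ) : R)
          * a k := by
  refine lowerTriangular_inversion (A := fun n k => (signedChoose n k : R))
    (B := fun n k => (ballotCoeff n k : R)) (fun n j hjn => ?_) (fun n => ?_)
  · simpa using congrArg (Int.cast : ℤ → R) (sum_ballotCoeff_mul_signedChoose hjn)
  · simp only [h n, signedChoose]
    push_cast
    rfl
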